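/- arXiv:1605.04575 — 7 statements merged into one kernel-verified Lean document; each statement's English description precedes it below -/
import Mathlib

section
/- If T is a subcubic tree of order n, then the fractional porous exponential domination number of T equals (n+2)/6. -/
open SimpleGraph Finset

variable {V : Type*}

/-- `(1/2)^(d-1)` for an extended natural `d`, with value `0` at `∞`. -/
noncomputable def halfPow (d : ℕ∞) : ℝ :=
  if d = ⊤ then 0 else 2 * (1 / 2 : ℝ) ^ d.toNat

/-- `(1/2)^(dist_G(u,v)-1)` using the ordinary graph distance. -/
noncomputable def expw (G : SimpleGraph V) (u v : V) : ℝ :=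
  2 * (1 / 2 : ℝ) ^ G.dist u v

/-- The modified distance `dist_{(G,D)}(u,v)`: minimum length of a path from `u` to `v`
whose only vertex in `D` is the endvertex `v` (`∞` if no such path exists). -/
noncomputable def mdist (G : SimpleGraph V) (D : Finset V) (u v : V) : ℕ∞ :=
  sInf ((fun p : G.Walk u v => (p.length : ℕ∞)) ''
    {p | p.IsPath ∧ v ∈ D ∧ ∀ w ∈ p.support, w ∈ D → w = v})

/-- `w_{(G,D)}(u)`. -/
noncomputable def wblock (G : SimpleGraph V) (D : Finset V) (u : V) : ℝ :=
  ∑ v ∈ D, halfPow (mdist G D u v)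

/-- `w*_{(G,D)}(u)`. -/
noncomputable def wstar (G : SimpleGraph V) (D : Finset V) (u : V) : ℝ :=
  ∑ v ∈ D, expw G u v

def IsExpDomSet (G : SimpleGraph V) (D : Finset V) : Prop :=
  ∀ u : V, 1 ≤ wblock G D u

def IsPorousExpDomSet (G : SimpleGraph V) (D : Finset V) : Prop :=
  ∀ u : V, 1 ≤ wstar G D u

def IsDomSet (G : SimpleGraph V) (D : Finset V) : Prop :=
  ∀ v : V, v ∉ D → ∃ u ∈ D, G.Adj u v

/-- The exponential domination number `γ_e(G)`. -/
noncomputable def gammaE (G : SimpleGraph V) [Fintype V] : ℕ :=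
  sInf {k | ∃ D : Finset V, IsExpDomSet G D ∧ D.card = k}

/-- The porous exponential domination number `γ*_e(G)`. -/
noncomputable def gammaEStar (G : SimpleGraph V) [Fintype V] : ℕ :=
  sInf {k | ∃ D : Finset V, IsPorousExpDomSet G D ∧ D.card = k}

/-- The domination number `γ(G)`. -/
noncomputable def gammaDom (G : SimpleGraph V) [Fintype V] : ℕ :=
  sInf {k | ∃ D : Finset V, IsDomSet G D ∧ D.card = k}

/-- Feasibility for the LP relaxation of porous exponential domination. -/
def FracFeasible (G : SimpleGraph V) [Fintype V] (x : V → ℝ) : Prop :=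
  (∀ u, 0 ≤ x u) ∧ ∀ v : V, 1 ≤ ∑ u : V, expw G u v * x u

/-- The fractional porous exponential domination number `γ*_{e,f}(G)`. -/
noncomputable def gammaEF (G : SimpleGraph V) [Fintype V] : ℝ :=
  sInf {s | ∃ x : V → ℝ, FracFeasible G x ∧ s = ∑ u : V, x u}

/-- A graph is subcubic if all degrees are at most `3`. -/
def Subcubic (G : SimpleGraph V) [Fintype V] [DecidableRel G.Adj] : Prop :=
  ∀ v : V, G.degree v ≤ 3

/-
Take `x₀ u = (3 - deg u) / 6`, which is nonnegative because the tree is subcubic. Rooting the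
tree at `v`, every vertex `u ≠ v` has exactly one neighbour closer to `v`, and its weight
`(1/2)^dist(·, v)` is twice that of `u`. Assigning every edge to its endpoint farther from `v`
gives `∑ u, (1/2)^dist(u, v) * deg u = 3 * ∑ u ≠ v, (1/2)^dist(u, v)`, so `x₀` satisfies
every constraint with equality. As the constraint matrix is symmetric, `x₀` is then also dual
feasible and weak duality makes it optimal; its value is `(3n - 2(n - 1)) / 6 = (n + 2) / 6`.
-/

namespace SimpleGraph

variable {G : SimpleGraph V}

lemma Connected.exists_adj_dist_add_one_eq (hG : G.Connected) {u v : V} (huv : u ≠ v) :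
    ∃ w, G.Adj u w ∧ G.dist w v + 1 = G.dist u v := by
  obtain ⟨p, hp⟩ := (hG u v).exists_walk_length_eq_dist
  cases p with
  | nil => exact absurd rfl huv
  | @cons _ w _ hadj q =>
    refine ⟨w, hadj, le_antisymm ?_ ?_⟩
    · rw [← hp, Walk.length_cons]
      exact Nat.add_le_add_right (dist_le q) 1
    · have := (hG w v).dist_triangle_right u
      rw [dist_eq_one_iff_adj.mpr hadj] at this
      omega

lemma IsTree.eq_of_adj_of_dist_add_one_eq (hG : G.IsTree) {u v w₁ w₂ : V}
    (h₁ : G.Adj u w₁) (h₂ : G.Adj u w₂)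
    (hd₁ : G.dist w₁ v + 1 = G.dist u v) (hd₂ : G.dist w₂ v + 1 = G.dist u v) :
    w₁ = w₂ := by
  obtain ⟨q₁, hq₁⟩ := (hG.connected w₁ v).exists_walk_length_eq_dist
  obtain ⟨q₂, hq₂⟩ := (hG.connected w₂ v).exists_walk_length_eq_dist
  have hp₁ : (q₁.cons h₁).IsPath := Walk.isPath_of_length_eq_dist _ (by simp [hq₁, hd₁])
  have hp₂ : (q₂.cons h₂).IsPath := Walk.isPath_of_length_eq_dist _ (by simp [hq₂, hd₂])
  simpa using congrArg Walk.snd ((hG.existsUnique_path u v).unique hp₁ hp₂)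

variable [Fintype V] [DecidableRel G.Adj]

variable (G) in
/-- In a tree rooted at `v`, the singleton of the parent of `u` (empty for `u = v`). -/
noncomputable def closerNeighborFinset (v u : V) : Finset V :=
  {w | G.Adj u w ∧ G.dist w v + 1 = G.dist u v}

@[simp]
lemma mem_closerNeighborFinset {v u w : V} :
    w ∈ G.closerNeighborFinset v u ↔ G.Adj u w ∧ G.dist w v + 1 = G.dist u v := by
  simp [closerNeighborFinset]

lemma IsTree.card_closerNeighborFinset [DecidableEq V] (hG : G.IsTree) (v u : V) :
    #(G.closerNeighborFinset v u) = if u = v then 0 else 1 := by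
  split_ifs with huv
  · subst huv
    simp [Finset.eq_empty_iff_forall_notMem]
  · obtain ⟨w, hw⟩ := hG.connected.exists_adj_dist_add_one_eq huv
    refine card_eq_one.mpr ⟨w, eq_singleton_iff_unique_mem.mpr ⟨by simpa using hw, ?_⟩⟩
    intro w' hw'
    rw [mem_closerNeighborFinset] at hw'
    exact hG.eq_of_adj_of_dist_add_one_eq hw'.1 hw.1 hw'.2 hw.2

lemma IsTree.neighborFinset_eq_union [DecidableEq V] (hG : G.IsTree) (v u : V) :
    G.neighborFinset u =
      G.closerNeighborFinset v u ∪ ({w | u ∈ G.closerNeighborFinset v w} : Finset V) := by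
  ext w
  simp only [mem_neighborFinset, mem_union, mem_closerNeighborFinset, mem_filter, mem_univ,
    true_and]
  constructor
  · intro h
    rcases hG.dist_eq_dist_add_one_of_adj v h with hd | hd
    · exact Or.inl ⟨h, by rw [dist_comm (u := w), dist_comm (u := u), hd]⟩
    · exact Or.inr ⟨h.symm, by rw [dist_comm (u := w), dist_comm (u := u), hd]⟩
  · rintro (h | h)
    · exact h.1
    · exact h.1.symm

lemma disjoint_closerNeighborFinset [DecidableEq V] (v u : V) :
    Disjoint (G.closerNeighborFinset v u) ({w | u ∈ G.closerNeighborFinset v w} : Finset V) := by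
  simp only [Finset.disjoint_left, mem_closerNeighborFinset, mem_filter, mem_univ, true_and]
  omega

lemma IsTree.sum_degree_smul {M : Type*} [AddCommMonoid M] (hG : G.IsTree) (v : V) (g : V → M) :
    ∑ u, G.degree u • g u = ∑ u, ∑ w ∈ G.closerNeighborFinset v u, (g u + g w) := by
  classical
  calc ∑ u, G.degree u • g u = ∑ u, ∑ w ∈ G.neighborFinset u, g u := by simp
    _ = ∑ u, ∑ w ∈ G.closerNeighborFinset v u, g u
          + ∑ u, ∑ w ∈ ({w | u ∈ G.closerNeighborFinset v w} : Finset V), g u := by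
      simp only [hG.neighborFinset_eq_union v, sum_union (disjoint_closerNeighborFinset v _),
        sum_add_distrib]
    _ = ∑ u, ∑ w ∈ G.closerNeighborFinset v u, g u
          + ∑ u, ∑ w ∈ G.closerNeighborFinset v u, g w := by
      congr 1
      exact sum_comm' (by simp)
    _ = ∑ u, ∑ w ∈ G.closerNeighborFinset v u, (g u + g w) := by
      simp only [sum_add_distrib]

lemma IsTree.sum_half_pow_dist_mul_three_sub_degree (hG : G.IsTree) (v : V) :
    ∑ u, (1 / 2 : ℝ) ^ G.dist u v * (3 - G.degree u) = 3 := by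
  classical
  set g : V → ℝ := fun u => (1 / 2 : ℝ) ^ G.dist u v
  have hparent : ∀ u, ∀ w ∈ G.closerNeighborFinset v u, g u + g w = 3 * g u := by
    intro u w hw
    rw [mem_closerNeighborFinset] at hw
    simp only [g, ← hw.2, pow_succ]
    ring
  have hdeg : ∑ u, G.degree u • g u = 3 * (∑ u, g u - g v) := by
    calc ∑ u, G.degree u • g u
        = ∑ u, ∑ w ∈ G.closerNeighborFinset v u, 3 * g u := by
          rw [hG.sum_degree_smul v]
          exact sum_congr rfl fun u _ => sum_congr rfl (hparent u)
      _ = ∑ u, (3 * g u - if u = v then 3 * g u else 0) := by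
          refine sum_congr rfl fun u _ => ?_
          rw [sum_const, hG.card_closerNeighborFinset]
          split_ifs <;> simp
      _ = 3 * (∑ u, g u - g v) := by
          rw [sum_sub_distrib, Fintype.sum_ite_eq', mul_sub, mul_sum]
  calc ∑ u, g u * (3 - G.degree u) = 3 * ∑ u, g u - ∑ u, G.degree u • g u := by
        simp only [nsmul_eq_mul, mul_sum, ← sum_sub_distrib]
        ring_nf
    _ = 3 := by
        rw [hdeg, show g v = 1 by simp [g]]
        ring

lemma IsTree.sum_expw_mul_three_sub_degree_div_six (hG : G.IsTree) (v : V) :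
    ∑ u, expw G u v * ((3 - G.degree u) / 6) = 1 := by
  calc ∑ u, expw G u v * ((3 - G.degree u) / 6)
      = (∑ u, (1 / 2 : ℝ) ^ G.dist u v * (3 - G.degree u)) / 3 := by
        rw [sum_div]
        exact sum_congr rfl fun u _ => by rw [expw]; ring
    _ = 1 := by
        rw [hG.sum_half_pow_dist_mul_three_sub_degree]
        norm_num

lemma IsTree.sum_three_sub_degree_div_six (hG : G.IsTree) :
    ∑ u : V, (3 - G.degree u : ℝ) / 6 = (Fintype.card V + 2) / 6 := by
  have hdeg : ∑ u, (G.degree u : ℝ) = 2 * #G.edgeFinset := by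
    exact_mod_cast G.sum_degrees_eq_twice_card_edges
  have hcard : (#G.edgeFinset : ℝ) + 1 = Fintype.card V := by
    exact_mod_cast hG.card_edgeFinset
  rw [← sum_div, sum_sub_distrib, hdeg, sum_const, card_univ, nsmul_eq_mul, ← hcard]
  ring

end SimpleGraph

lemma expw_comm (G : SimpleGraph V) (u v : V) : expw G u v = expw G v u := by
  rw [expw, expw, dist_comm]

section Fractional

variable [Fintype V] {G : SimpleGraph V}

/-- Weak duality: `expw` is symmetric, so a nonnegative `x₀` satisfying every constraint with
equality is also feasible for the dual LP. -/
lemma sum_le_sum_of_fracFeasible {x₀ x : V → ℝ} (hx₀ : ∀ u, 0 ≤ x₀ u)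
    (htight : ∀ v, ∑ u, expw G u v * x₀ u = 1) (hx : FracFeasible G x) :
    ∑ u, x₀ u ≤ ∑ u, x u :=
  calc ∑ v, x₀ v ≤ ∑ v, x₀ v * ∑ u, expw G u v * x u :=
        sum_le_sum fun v _ => le_mul_of_one_le_right (hx₀ v) (hx.2 v)
    _ = ∑ u, (∑ v, expw G v u * x₀ v) * x u := by
        simp only [mul_sum, sum_mul]
        rw [sum_comm]
        exact sum_congr rfl fun u _ => sum_congr rfl fun v _ => by rw [expw_comm]; ring
    _ = ∑ u, x u := by simp [htight]

lemma gammaEF_eq_sum_of_tight {x₀ : V → ℝ} (hx₀ : ∀ u, 0 ≤ x₀ u)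
    (htight : ∀ v, ∑ u, expw G u v * x₀ u = 1) : gammaEF G = ∑ u, x₀ u :=
  IsLeast.csInf_eq ⟨⟨x₀, ⟨hx₀, fun v => (htight v).ge⟩, rfl⟩, by
    rintro _ ⟨x, hx, rfl⟩
    exact sum_le_sum_of_fracFeasible hx₀ htight hx⟩

end Fractional

/-- If `T` is a subcubic tree of order `n`, then `γ*_{e,f}(T) = (n+2)/6`. -/
theorem stmt_0 {V : Type*} [Fintype V] (G : SimpleGraph V) [DecidableRel G.Adj]
    (hT : G.IsTree) (hsub : Subcubic G) :
    gammaEF G = ((Fintype.card V : ℝ) + 2) / 6 := by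
  have hx₀ : ∀ u, 0 ≤ (3 - G.degree u : ℝ) / 6 := fun u =>
    div_nonneg (sub_nonneg.mpr (by exact_mod_cast hsub u)) (by norm_num)
  rw [gammaEF_eq_sum_of_tight hx₀ hT.sum_expw_mul_three_sub_degree_div_six,
    hT.sum_three_sub_degree_div_six]
end

section
/- In a tree whose every vertex has degree 1 or 3, assigning weight 1 to every endvertex yields, for each vertex v, that the sum over all endvertices u of (1/2)^{dist(u,v)-1} equals exactly 3. -/
open SimpleGraph Finset

variable {V : Type*}

/-!
For an edge `vw`, the endvertices `u` in the branch at `w` away from `v` satisfy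
`∑ (1/2)^dist(u,v) = 1/2`, by induction on the size of the branch: either `w` is itself an
endvertex and the branch is `{w}`, or `w` has degree 3 and the two smaller branches behind it
contribute `1/2` each relative to `w`, hence `1/4` each relative to `v`. Summing over the branches
at `v`, plus `1` for `v` itself if it is an endvertex, gives `3/2` both when `deg v = 1` and when
`deg v = 3`.
-/

namespace SimpleGraph

variable {G : SimpleGraph V} {u v w x y : V}

theorem Reachable.exists_adj_dist_add_one (h : G.Reachable u v) (hne : u ≠ v) :
    ∃ x, G.Adj v x ∧ G.dist u x + 1 = G.dist u v := by
  obtain ⟨p, -, hp⟩ := h.symm.exists_path_of_dist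
  cases p with
  | nil => exact absurd rfl hne
  | @cons _ x _ hadj q =>
    refine ⟨x, hadj, ?_⟩
    have h₁ : G.dist x u ≤ q.length := dist_le q
    have h₂ : G.dist v u ≤ G.dist v x + G.dist x u := hadj.reachable.dist_triangle_left u
    rw [dist_eq_one_iff_adj.mpr hadj] at h₂
    rw [Walk.length_cons] at hp
    rw [dist_comm, dist_comm (u := u)]
    omega

theorem IsAcyclic.eq_of_adj_of_dist_add_one (hG : G.IsAcyclic) (hx : G.Adj v x) (hy : G.Adj v y)
    (hdx : G.dist u x + 1 = G.dist u v) (hdy : G.dist u y + 1 = G.dist u v) : x = y := by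
  classical
  have hreach : G.Reachable u v := by
    by_contra h
    simp [dist_eq_zero_of_not_reachable h] at hdx
  obtain ⟨p, hp, -⟩ := hreach.exists_path_of_dist
  -- `x` and `y` are neighbours of `v` on the unique `u`-`v` path, so both are its penultimate.
  have on_path : ∀ z, G.Adj v z → G.dist u z + 1 = G.dist u v → z = p.penultimate := by
    intro z hz hdz
    obtain ⟨q, hq, hql⟩ := (hreach.trans hz.reachable).exists_path_of_dist
    have hvq : v ∉ q.support := fun hv => by
      have := dist_le (q.takeUntil v hv)
      have := q.length_takeUntil_le_length hv
      omega
    exact hG.eq_penultimate_of_adj_end hp hz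
      (hG.mem_support_of_ne_mem_support_of_adj_of_isPath hp hq hz hvq)
  rw [on_path x hx hdx, on_path y hy hdy]

variable [Fintype V]

/-- For an edge `vw` of a tree, the vertices of the component of `G - vw` containing `w`. -/
noncomputable def branch (G : SimpleGraph V) (v w : V) : Finset V :=
  {u | G.dist u v = G.dist u w + 1}

@[simp]
theorem mem_branch : u ∈ G.branch v w ↔ G.dist u v = G.dist u w + 1 := by
  simp [branch]

theorem self_mem_branch (hadj : G.Adj v w) : w ∈ G.branch v w := by
  simp [dist_comm, hadj]

theorem ne_of_mem_branch (hu : u ∈ G.branch v w) : u ≠ v := by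
  rintro rfl
  simp at hu

variable [DecidableRel G.Adj]

theorem IsAcyclic.pairwiseDisjoint_branch (hG : G.IsAcyclic) (w : V) :
    ((G.neighborFinset w : Finset V) : Set V).PairwiseDisjoint (G.branch w) := by
  intro x hx y hy hne
  simp only [coe_neighborFinset, mem_neighborSet] at hx hy
  refine Finset.disjoint_left.mpr fun u hux huy => hne ?_
  exact hG.eq_of_adj_of_dist_add_one hx hy (mem_branch.mp hux).symm (mem_branch.mp huy).symm

variable [DecidableEq V]

theorem IsTree.erase_eq_biUnion_branch (hG : G.IsTree) (w : V) :
    Finset.univ.erase w = (G.neighborFinset w).biUnion (G.branch w) := by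
  ext u
  simp only [Finset.mem_erase, Finset.mem_univ, and_true, Finset.mem_biUnion,
    mem_neighborFinset, mem_branch]
  constructor
  · intro hne
    obtain ⟨x, hx, hd⟩ := (hG.connected u w).exists_adj_dist_add_one hne
    exact ⟨x, hx, hd.symm⟩
  · rintro ⟨x, -, hu⟩
    exact ne_of_mem_branch (mem_branch.mpr hu)

theorem IsTree.branch_erase_eq_biUnion_branch (hG : G.IsTree) (hadj : G.Adj v w) :
    (G.branch v w).erase w = ((G.neighborFinset w).erase v).biUnion (G.branch w) := by
  ext u
  simp only [Finset.mem_erase, Finset.mem_biUnion, mem_neighborFinset, mem_branch]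
  constructor
  · rintro ⟨hne, hu⟩
    obtain ⟨x, hx, hd⟩ := (hG.connected u w).exists_adj_dist_add_one hne
    refine ⟨x, ⟨?_, hx⟩, hd.symm⟩
    rintro rfl
    omega
  · rintro ⟨x, ⟨hxv, hx⟩, hu⟩
    refine ⟨ne_of_mem_branch (mem_branch.mpr hu), ?_⟩
    -- Otherwise `v` and `x` would both be neighbours of `w` one step closer to `u`.
    refine (hG.dist_eq_dist_add_one_of_adj u hadj).resolve_right fun hvw => hxv ?_
    exact hG.isAcyclic.eq_of_adj_of_dist_add_one hx hadj.symm hu.symm hvw.symm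

theorem IsTree.card_branch_lt (hG : G.IsTree) (hadj : G.Adj v w)
    (hx : x ∈ (G.neighborFinset w).erase v) : #(G.branch w x) < #(G.branch v w) := by
  refine Finset.card_lt_card (lt_of_le_of_lt ?_ (Finset.erase_ssubset (self_mem_branch hadj)))
  rw [hG.branch_erase_eq_biUnion_branch hadj]
  exact Finset.subset_biUnion_of_mem _ hx

variable {M : Type*} [AddCommMonoid M]

theorem IsTree.sum_univ_eq_add_sum_branch (hG : G.IsTree) (w : V) (f : V → M) :
    ∑ u, f u = f w + ∑ x ∈ G.neighborFinset w, ∑ u ∈ G.branch w x, f u := by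
  rw [← Finset.add_sum_erase _ _ (Finset.mem_univ w), hG.erase_eq_biUnion_branch,
    Finset.sum_biUnion (hG.isAcyclic.pairwiseDisjoint_branch w)]

theorem IsTree.sum_branch_eq_add_sum_branch (hG : G.IsTree) (hadj : G.Adj v w) (f : V → M) :
    ∑ u ∈ G.branch v w, f u =
      f w + ∑ x ∈ (G.neighborFinset w).erase v, ∑ u ∈ G.branch w x, f u := by
  rw [← Finset.add_sum_erase _ _ (self_mem_branch hadj), hG.branch_erase_eq_biUnion_branch hadj,
    Finset.sum_biUnion ((hG.isAcyclic.pairwiseDisjoint_branch w).subset (by simp))]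

theorem IsTree.sum_halfPow_dist_leaves_branch (hG : G.IsTree)
    (hdeg : ∀ v : V, G.degree v = 1 ∨ G.degree v = 3) (hadj : G.Adj v w) :
    ∑ u ∈ G.branch v w with G.degree u = 1, (1 / 2 : ℝ) ^ G.dist u v = 1 / 2 := by
  induction h : #(G.branch v w) using Nat.strong_induction_on generalizing v w with
  | _ n ih =>
    have hsub : ∀ x ∈ (G.neighborFinset w).erase v,
        ∑ u ∈ G.branch w x, (if G.degree u = 1 then (1 / 2 : ℝ) ^ G.dist u w else 0) =
          1 / 2 := by
      intro x hx
      rw [← Finset.sum_filter]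
      exact ih _ (h ▸ hG.card_branch_lt hadj hx)
        ((G.mem_neighborFinset _ _).mp (Finset.mem_of_mem_erase hx)) rfl
    have hcard : #((G.neighborFinset w).erase v) = G.degree w - 1 := by
      rw [Finset.card_erase_of_mem ((G.mem_neighborFinset _ _).mpr hadj.symm),
        card_neighborFinset_eq_degree]
    calc ∑ u ∈ G.branch v w with G.degree u = 1, (1 / 2 : ℝ) ^ G.dist u v
        = 1 / 2 * ∑ u ∈ G.branch v w with G.degree u = 1, (1 / 2 : ℝ) ^ G.dist u w := by
          rw [Finset.mul_sum]
          refine Finset.sum_congr rfl fun u hu => ?_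
          rw [mem_branch.mp (Finset.mem_filter.mp hu).1, pow_succ, mul_comm]
      _ = 1 / 2 * ((if G.degree w = 1 then 1 else 0) + (G.degree w - 1 : ℕ) * (1 / 2)) := by
          rw [Finset.sum_filter, hG.sum_branch_eq_add_sum_branch hadj, Finset.sum_congr rfl hsub,
            Finset.sum_const, hcard, nsmul_eq_mul, dist_self, pow_zero]
      _ = 1 / 2 := by rcases hdeg w with hw | hw <;> norm_num [hw]

end SimpleGraph

theorem stmt_1_general {V : Type*} [Fintype V] (G : SimpleGraph V) [DecidableRel G.Adj]
    (hT : G.IsTree) (hdeg : ∀ v : V, G.degree v = 1 ∨ G.degree v = 3) (v : V) :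
    ∑ u ∈ Finset.univ.filter (fun u => G.degree u = 1), expw G u v = 3 := by
  classical
  have hsub : ∀ x ∈ G.neighborFinset v,
      ∑ u ∈ G.branch v x, (if G.degree u = 1 then (1 / 2 : ℝ) ^ G.dist u v else 0) = 1 / 2 :=
    fun x hx => by
      rw [← Finset.sum_filter]
      exact hT.sum_halfPow_dist_leaves_branch hdeg ((G.mem_neighborFinset _ _).mp hx)
  have hsum : ∑ u with G.degree u = 1, (1 / 2 : ℝ) ^ G.dist u v = 3 / 2 := by
    rw [Finset.sum_filter, hT.sum_univ_eq_add_sum_branch v, Finset.sum_congr rfl hsub,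
      Finset.sum_const, card_neighborFinset_eq_degree, nsmul_eq_mul, SimpleGraph.dist_self,
      pow_zero]
    rcases hdeg v with hv | hv <;> norm_num [hv]
  simp only [expw, ← Finset.mul_sum, hsum]
  norm_num

/-- In a tree whose every vertex has degree 1 or 3 (order at least 2), for each vertex `v`
the sum over all endvertices `u` of `(1/2)^(dist(u,v)-1)` equals `3`. -/
theorem stmt_1 {V : Type*} [Fintype V] (G : SimpleGraph V) [DecidableRel G.Adj]
    (hT : G.IsTree) (hdeg : ∀ v : V, G.degree v = 1 ∨ G.degree v = 3)
    (hcard : 2 ≤ Fintype.card V) (v : V) :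
    ∑ u ∈ Finset.univ.filter (fun u => G.degree u = 1), expw G u v = 3 :=
  stmt_1_general G hT hdeg v
end

section
/- Let T be a subcubic tree with γ*_e(T) = γ*_{e,f}(T) > 1 and let D be a minimum porous exponential dominating set of T. Then w*_{(T,D)}(u) = 1 for every vertex u of degree 1 or 2 in T. -/
open SimpleGraph Finset

variable {V : Type*}

/-! The weights `x u = (3 - deg u) / 6` form a fractional solution of every subcubic tree that is
tight at every vertex: rooting the tree at `v`, each edge joins some `u ≠ v` to its parent, whence
`∑ u, deg u · 2^(-d(u,v)) = 3 (∑ u, 2^(-d(u,v)) - 1)`. Tightness turns `|D|` into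
`∑ u, x u · w*(u)`, which exceeds `∑ u, x u ≥ γ*_{e,f}` as soon as `w*(u) > 1` at a vertex with
`x u > 0`, i.e. of degree 1 or 2; for a minimum `D` this contradicts `γ*_e = γ*_{e,f}`. -/

namespace SimpleGraph

variable {G : SimpleGraph V}

lemma IsTree.card_filter_neighborFinset_dist_add_one_eq [Fintype V] [DecidableEq V]
    [DecidableRel G.Adj] (hG : G.IsTree) (u v : V) :
    #{w ∈ G.neighborFinset u | G.dist w v + 1 = G.dist u v} = if u = v then 0 else 1 := by
  split_ifs with huv
  · subst huv
    simp
  · obtain ⟨w, hw, hwd⟩ := hG.connected.exists_adj_dist_add_one_eq huv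
    rw [Finset.card_eq_one]
    refine ⟨w, Finset.eq_singleton_iff_unique_mem.2 ⟨by simp [hw, hwd], fun w' hw' => ?_⟩⟩
    simp only [Finset.mem_filter, mem_neighborFinset] at hw'
    exact hG.eq_of_adj_of_dist_add_one_eq hw'.1 hw hw'.2 hwd

lemma sum_sum_neighborFinset_comm [Fintype V] [DecidableRel G.Adj] {M : Type*} [AddCommMonoid M]
    (f : V → V → M) :
    ∑ u, ∑ w ∈ G.neighborFinset u, f u w = ∑ u, ∑ w ∈ G.neighborFinset u, f w u := by
  simp only [neighborFinset_eq_filter, Finset.sum_filter]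
  rw [Finset.sum_comm]
  refine Finset.sum_congr rfl fun u _ => Finset.sum_congr rfl fun w _ => ?_
  exact if_congr (G.adj_comm w u) rfl rfl

/-- Rooting the tree at `v`, every edge joins a vertex `u ≠ v` to its parent `w`. -/
lemma IsTree.sum_degree_mul [Fintype V] [DecidableRel G.Adj] {R : Type*} [CommSemiring R]
    (hG : G.IsTree) (v : V) (g : V → R) :
    ∑ u, G.degree u * g u =
      ∑ u, ∑ w ∈ G.neighborFinset u with G.dist w v + 1 = G.dist u v, (g u + g w) := by
  have toward_root (u w : V) (h : G.Adj u w) :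
      ¬ G.dist w v + 1 = G.dist u v ↔ G.dist u v + 1 = G.dist w v := by
    have := hG.dist_eq_dist_add_one_of_adj v h
    rw [dist_comm, G.dist_comm (u := v)] at this
    omega
  calc ∑ u, G.degree u * g u
      = ∑ u, ∑ w ∈ G.neighborFinset u, g u := by simp [← card_neighborFinset_eq_degree]
    _ = ∑ u, ∑ w ∈ G.neighborFinset u with G.dist w v + 1 = G.dist u v, g u
        + ∑ u, ∑ w ∈ G.neighborFinset u with G.dist u v + 1 = G.dist w v, g u := by
      rw [← Finset.sum_add_distrib]
      refine Finset.sum_congr rfl fun u _ => ?_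
      rw [← Finset.sum_filter_add_sum_filter_not _ (fun w => G.dist w v + 1 = G.dist u v)]
      congr 1
      exact Finset.sum_congr (Finset.filter_congr fun w hw =>
        toward_root u w ((mem_neighborFinset _ _ _).1 hw)) fun _ _ => rfl
    _ = _ := by
      simp only [Finset.sum_filter]
      rw [sum_sum_neighborFinset_comm (fun u w => if G.dist u v + 1 = G.dist w v then g u else 0),
        ← Finset.sum_add_distrib]
      refine Finset.sum_congr rfl fun u _ => ?_
      rw [← Finset.sum_add_distrib]
      exact Finset.sum_congr rfl fun w _ => by split_ifs <;> simp

lemma IsTree.mul_sum_degree_mul_pow_dist [Fintype V] [DecidableRel G.Adj] {R : Type*}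
    [CommRing R] (hG : G.IsTree) (v : V) (r : R) :
    r * ∑ u, G.degree u * r ^ G.dist u v = (1 + r) * (∑ u, r ^ G.dist u v - 1) := by
  classical
  rw [hG.sum_degree_mul v, Finset.mul_sum]
  have parent_sum (u : V) :
      r * ∑ w ∈ G.neighborFinset u with G.dist w v + 1 = G.dist u v,
        (r ^ G.dist u v + r ^ G.dist w v) = if u = v then 0 else (1 + r) * r ^ G.dist u v := by
    have parent_term : ∀ w ∈ {w ∈ G.neighborFinset u | G.dist w v + 1 = G.dist u v},
        r * (r ^ G.dist u v + r ^ G.dist w v) = (1 + r) * r ^ G.dist u v := fun w hw => by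
      rw [← (Finset.mem_filter.1 hw).2]
      ring
    rw [Finset.mul_sum, Finset.sum_congr rfl parent_term, Finset.sum_const,
      hG.card_filter_neighborFinset_dist_add_one_eq]
    split_ifs <;> simp
  simp only [parent_sum, Finset.sum_ite, Finset.filter_ne', Finset.sum_const_zero, zero_add,
    ← Finset.mul_sum, Finset.sum_erase_eq_sub (Finset.mem_univ v), dist_self, pow_zero]
  ring

lemma IsTree.sum_expw_mul_three_sub_degree [Fintype V] [DecidableRel G.Adj] (hG : G.IsTree)
    (v : V) : ∑ u, expw G u v * ((3 - G.degree u) / 6) = 1 := by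
  calc ∑ u, expw G u v * ((3 - G.degree u) / 6)
      = ∑ u, (1 / 2 : ℝ) ^ G.dist u v
          - 2 / 3 * (1 / 2 * ∑ u, G.degree u * (1 / 2 : ℝ) ^ G.dist u v) := by
        rw [Finset.mul_sum, Finset.mul_sum, ← Finset.sum_sub_distrib]
        exact Finset.sum_congr rfl fun u _ => by rw [expw]; ring
    _ = 1 := by
        rw [hG.mul_sum_degree_mul_pow_dist]
        ring

end SimpleGraph

section FractionalSolution

variable {G : SimpleGraph V} [Fintype V]

lemma gammaEF_le_sum {x : V → ℝ} (hx : FracFeasible G x) : gammaEF G ≤ ∑ u, x u :=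
  csInf_le ⟨0, by rintro _ ⟨y, hy, rfl⟩; exact Finset.sum_nonneg fun u _ => hy.1 u⟩ ⟨x, hx, rfl⟩

lemma card_eq_sum_mul_wstar {x : V → ℝ} (hx : ∀ v, ∑ u, expw G u v * x u = 1) (D : Finset V) :
    (#D : ℝ) = ∑ u, x u * wstar G D u := by
  calc (#D : ℝ) = ∑ v ∈ D, ∑ u, expw G u v * x u := by simp [hx]
    _ = ∑ u, x u * wstar G D u := by
      rw [Finset.sum_comm]
      simp only [wstar, Finset.mul_sum, mul_comm]

lemma wstar_eq_one_of_card_le_gammaEF {x : V → ℝ} (hx₀ : ∀ u, 0 ≤ x u)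
    (hx : ∀ v, ∑ u, expw G u v * x u = 1) {D : Finset V} (hD : IsPorousExpDomSet G D)
    (hcard : (#D : ℝ) ≤ gammaEF G) {u : V} (hu : 0 < x u) : wstar G D u = 1 := by
  refine le_antisymm (not_lt.1 fun hlt => ?_) (hD u)
  have : ∑ w, x w < ∑ w, x w * wstar G D w :=
    Finset.sum_lt_sum (fun w _ => le_mul_of_one_le_right (hx₀ w) (hD w))
      ⟨u, Finset.mem_univ u, lt_mul_of_one_lt_right hu hlt⟩
  linarith [gammaEF_le_sum ⟨hx₀, fun v => (hx v).ge⟩, card_eq_sum_mul_wstar hx D]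

end FractionalSolution

theorem stmt_7_general {V : Type*} [Fintype V] (G : SimpleGraph V) [DecidableRel G.Adj]
    (hT : G.IsTree) (hsub : Subcubic G)
    (heq : (gammaEStar G : ℝ) = gammaEF G)
    (D : Finset V) (hD : IsPorousExpDomSet G D) (hmin : D.card = gammaEStar G)
    (u : V) (hu : G.degree u = 1 ∨ G.degree u = 2) :
    wstar G D u = 1 := by
  refine wstar_eq_one_of_card_le_gammaEF (x := fun w => (3 - G.degree w : ℝ) / 6)
    (fun w => ?_) hT.sum_expw_mul_three_sub_degree hD (by rw [hmin, heq]) ?_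
  · have : (G.degree w : ℝ) ≤ 3 := by exact_mod_cast hsub w
    linarith
  · rcases hu with h | h <;> norm_num [h]

/-- If `T` is a subcubic tree with `γ*_e(T) = γ*_{e,f}(T) > 1` and `D` is a minimum porous
exponential dominating set, then `w*_{(T,D)}(u) = 1` for every vertex `u` of degree 1 or 2. -/
theorem stmt_7 {V : Type*} [Fintype V] (G : SimpleGraph V) [DecidableRel G.Adj]
    (hT : G.IsTree) (hsub : Subcubic G)
    (heq : (gammaEStar G : ℝ) = gammaEF G) (hgt : 1 < gammaEStar G)
    (D : Finset V) (hD : IsPorousExpDomSet G D) (hmin : D.card = gammaEStar G)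
    (u : V) (hu : G.degree u = 1 ∨ G.degree u = 2) :
    wstar G D u = 1 :=
  stmt_7_general G hT hsub heq D hD hmin u hu
end

section
/- If G is a connected graph of diameter d, then γ*_{e,f}(G) ≥ (d+3)/6. -/
open SimpleGraph Finset

variable {V : Type*}

/-
Weak LP duality: take a diametral pair `s, t` with `dist s t = d` and, for each `0 ≤ i ≤ d`, a
vertex `wᵢ` at distance `i` from `s`. The weights `yᵢ = 1/6`, raised to `1/3` at `i = 0` and
`i = d`, form a feasible dual solution: a vertex `u` with `dist s u = a` has `dist u wᵢ ≥ |a - i|`,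
so its load `∑ᵢ yᵢ (1/2)^(dist u wᵢ - 1)` is at most `⅓ (∑ᵢ (1/2)^|a-i| + (1/2)^a + (1/2)^|a-d|)`,
and the two-sided geometric series keeps the bracket at most `3`. The dual value is `(d+3)/6`.
-/

lemma expw_le_of_le_dist {G : SimpleGraph V} {u v : V} {k : ℕ} (hk : k ≤ G.dist u v) :
    expw G u v ≤ 2 * (1 / 2 : ℝ) ^ k :=
  mul_le_mul_of_nonneg_left (pow_le_pow_of_le_one (by norm_num) (by norm_num) hk) zero_le_two

section Duality

variable {G : SimpleGraph V} [Fintype V]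

lemma fracFeasible_one : FracFeasible G 1 := by
  refine ⟨fun _ => zero_le_one, fun v => ?_⟩
  have hself : expw G v v * (1 : V → ℝ) v = 2 := by simp [expw]
  calc (1 : ℝ) ≤ expw G v v * (1 : V → ℝ) v := by rw [hself]; norm_num
    _ ≤ ∑ u : V, expw G u v * (1 : V → ℝ) u :=
      single_le_sum (f := fun u => expw G u v * (1 : V → ℝ) u)
        (fun u _ => by simp only [expw, Pi.one_apply]; positivity) (mem_univ v)

lemma sum_le_sum_of_fracFeasible_s11 {ι : Type*} {I : Finset ι} {w : ι → V} {c : ι → ℝ}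
    (hc : ∀ i ∈ I, 0 ≤ c i) (hdual : ∀ u, ∑ i ∈ I, c i * expw G u (w i) ≤ 1)
    {x : V → ℝ} (hx : FracFeasible G x) : ∑ i ∈ I, c i ≤ ∑ u, x u :=
  calc ∑ i ∈ I, c i ≤ ∑ i ∈ I, c i * ∑ u, expw G u (w i) * x u :=
        sum_le_sum fun i hi => le_mul_of_one_le_right (hc i hi) (hx.2 (w i))
    _ = ∑ u, (∑ i ∈ I, c i * expw G u (w i)) * x u := by
        simp only [mul_sum, sum_mul]
        rw [sum_comm]
        exact sum_congr rfl fun _ _ => sum_congr rfl fun _ _ => by ring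
    _ ≤ ∑ u, x u :=
        sum_le_sum fun u _ => mul_le_of_le_one_left (hx.1 u) (hdual u)

lemma le_gammaEF {ι : Type*} {I : Finset ι} {w : ι → V} {c : ι → ℝ}
    (hc : ∀ i ∈ I, 0 ≤ c i) (hdual : ∀ u, ∑ i ∈ I, c i * expw G u (w i) ≤ 1) :
    ∑ i ∈ I, c i ≤ gammaEF G :=
  le_csInf ⟨_, 1, fracFeasible_one, rfl⟩ fun _ ⟨_, hx, hs⟩ =>
    hs ▸ sum_le_sum_of_fracFeasible_s11 hc hdual hx

end Duality

namespace SimpleGraph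

variable {G : SimpleGraph V}

lemma Walk.exists_mem_support_dist_eq {s v t : V} (p : G.Walk v t) {i : ℕ}
    (hv : G.dist s v ≤ i) (ht : i ≤ G.dist s t) : ∃ w ∈ p.support, G.dist s w = i := by
  induction p with
  | nil => exact ⟨_, Walk.start_mem_support _, le_antisymm hv ht⟩
  | @cons v v' _ hadj p ih =>
    rcases hv.eq_or_lt with hv | hv
    · exact ⟨v, Walk.start_mem_support _, hv⟩
    · have hstep : G.dist s v' ≤ G.dist s v + 1 := by
        rcases hadj.diff_dist_adj (u := s) with h | h | h <;> omega
      obtain ⟨w, hw, hwi⟩ := ih (by omega) ht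
      exact ⟨w, by simp [hw], hwi⟩

lemma Reachable.exists_dist_eq {s t : V} (h : G.Reachable s t) {i : ℕ}
    (hi : i ≤ G.dist s t) : ∃ w, G.dist s w = i :=
  let ⟨w, _, hw⟩ := h.some.exists_mem_support_dist_eq (by simp) hi
  ⟨w, hw⟩

lemma Connected.natDist_dist_le (hc : G.Connected) (s u w : V) :
    Nat.dist (G.dist s u) (G.dist s w) ≤ G.dist u w := by
  have hu : G.dist s u ≤ G.dist s w + G.dist w u := hc.dist_triangle
  have hw : G.dist s w ≤ G.dist s u + G.dist u w := hc.dist_triangle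
  rw [dist_comm (u := w)] at hu
  unfold Nat.dist
  omega

end SimpleGraph

lemma sum_range_half_pow (n : ℕ) : ∑ i ∈ range n, (1 / 2 : ℝ) ^ i = 2 - 2 * (1 / 2) ^ n := by
  induction n with
  | zero => simp
  | succ n ih => rw [sum_range_succ, ih, pow_succ]; ring

lemma sum_half_pow_natDist_add_le_three (d a : ℕ) :
    ∑ i ∈ range (d + 1), (1 / 2 : ℝ) ^ Nat.dist a i + (1 / 2) ^ a + (1 / 2) ^ Nat.dist a d ≤ 3 := by
  induction d generalizing a with
  | zero =>
    have : (1 / 2 : ℝ) ^ a ≤ 1 := pow_le_one₀ (by norm_num) (by norm_num)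
    simp only [zero_add, sum_range_one, Nat.dist_zero_right]
    linarith
  | succ d ih =>
    cases a with
    | zero =>
      simp only [Nat.dist_zero_left, sum_range_half_pow, pow_zero, pow_succ]
      linarith [pow_nonneg (by norm_num : (0 : ℝ) ≤ 1 / 2) d]
    | succ a =>
      have hshift : ∑ i ∈ range (d + 2), (1 / 2 : ℝ) ^ Nat.dist (a + 1) i
          = ∑ i ∈ range (d + 1), (1 / 2 : ℝ) ^ Nat.dist a i + (1 / 2) ^ (a + 1) := by
        rw [sum_range_succ', Nat.dist_zero_right]
        simp only [Nat.dist_succ_succ]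
      rw [hshift, Nat.dist_succ_succ, pow_succ]
      linarith [ih a]

noncomputable def diamDualWeight (d i : ℕ) : ℝ :=
  (1 + (if i = 0 then 1 else 0) + (if i = d then 1 else 0)) / 6

lemma diamDualWeight_nonneg (d i : ℕ) : 0 ≤ diamDualWeight d i := by
  unfold diamDualWeight
  positivity

lemma sum_diamDualWeight (d : ℕ) : ∑ i ∈ range (d + 1), diamDualWeight d i = ((d : ℝ) + 3) / 6 := by
  simp only [diamDualWeight, ← sum_div, sum_add_distrib, sum_ite_eq', mem_range, Nat.lt_succ_iff,
    zero_le, le_refl, if_true, sum_const, card_range, nsmul_one]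
  push_cast
  ring

lemma sum_diamDualWeight_mul_le_one (d a : ℕ) :
    ∑ i ∈ range (d + 1), diamDualWeight d i * (2 * (1 / 2 : ℝ) ^ Nat.dist a i) ≤ 1 := by
  have hexpand : ∀ i, diamDualWeight d i * (2 * (1 / 2 : ℝ) ^ Nat.dist a i)
      = ((1 / 2 : ℝ) ^ Nat.dist a i + (if i = 0 then (1 / 2 : ℝ) ^ Nat.dist a i else 0)
        + (if i = d then (1 / 2 : ℝ) ^ Nat.dist a i else 0)) / 3 := by
    intro i
    unfold diamDualWeight
    split_ifs <;> ring
  simp only [hexpand, ← sum_div, sum_add_distrib, sum_ite_eq', mem_range]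
  simp only [Nat.lt_succ_iff, zero_le, le_refl, if_true, Nat.dist_zero_right]
  linarith [sum_half_pow_natDist_add_le_three d a]

/-- If `G` is a connected graph of diameter `d`, then `γ*_{e,f}(G) ≥ (d+3)/6`. -/
theorem stmt_11 {V : Type*} [Fintype V] (G : SimpleGraph V) (hc : G.Connected) :
    ((G.diam : ℝ) + 3) / 6 ≤ gammaEF G := by
  have := hc.nonempty
  obtain ⟨s, t, hst⟩ := G.exists_dist_eq_diam
  choose! w hw using fun i (hi : i ≤ G.diam) => (hc s t).exists_dist_eq (hst ▸ hi)
  rw [← sum_diamDualWeight]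
  refine le_gammaEF (w := w) (fun i _ => diamDualWeight_nonneg _ i) fun u => ?_
  calc ∑ i ∈ range (G.diam + 1), diamDualWeight G.diam i * expw G u (w i)
      ≤ ∑ i ∈ range (G.diam + 1),
          diamDualWeight G.diam i * (2 * (1 / 2 : ℝ) ^ Nat.dist (G.dist s u) i) := by
        refine sum_le_sum fun i hi => mul_le_mul_of_nonneg_left ?_ (diamDualWeight_nonneg _ i)
        apply expw_le_of_le_dist
        simpa [hw i (Nat.lt_succ_iff.mp (mem_range.mp hi))] using hc.natDist_dist_le s u (w i)
    _ ≤ 1 := sum_diamDualWeight_mul_le_one _ _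
end

section
/- If G is a connected graph of order n, maximum degree Δ ≥ 4, and diameter d, then γ*_{e,f}(G) ≥ n · ((Δ-1)/2 - 1) / (Δ·((Δ-1)/2)^d - 3). -/
open SimpleGraph Finset

variable {V : Type*}

/-!
Summing the LP constraints over all `v` gives `n ≤ ∑ᵤ x(u) ∑ᵥ 2 (1/2)^dist(u,v)`. Since at most
`Δ(Δ-1)^(i-1)` vertices lie at distance `i ≥ 1` from `u` and none beyond the diameter `d`, the inner
sum is at most `2 + Δ ∑_{i<d} q^i = (Δ q^d - 3)/(q - 1)` with `q = (Δ-1)/2`.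
-/

namespace SimpleGraph

variable {G : SimpleGraph V}

theorem exists_adj_dist_eq_of_dist_eq_add_one {u v : V} {i : ℕ} (h : G.dist u v = i + 1) :
    ∃ w, G.Adj w v ∧ G.dist u w = i := by
  have hvu : G.dist v u = i + 1 := by rw [dist_comm, h]
  obtain ⟨p, hp⟩ := exists_walk_of_dist_ne_zero (G := G) (u := v) (v := u) (by omega)
  cases p with
  | nil => simp at hvu
  | @cons _ w _ hadj q =>
    refine ⟨w, hadj.symm, ?_⟩
    have hle : G.dist u w ≤ i := by
      rw [Walk.length_cons, hvu] at hp
      rw [dist_comm]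
      exact (dist_le q).trans_eq (by omega)
    have hge := hadj.symm.reachable.dist_triangle_right u
    rw [dist_eq_one_iff_adj.mpr hadj.symm] at hge
    omega

variable [Fintype V]

variable (G) in
noncomputable def distSphere (u : V) (i : ℕ) : Finset V := {v | G.dist u v = i}

@[simp]
theorem mem_distSphere {u v : V} {i : ℕ} : v ∈ G.distSphere u i ↔ G.dist u v = i := by
  simp [distSphere]

theorem Connected.distSphere_zero (hc : G.Connected) (u : V) : G.distSphere u 0 = {u} := by
  ext v
  simp [hc.dist_eq_zero_iff, eq_comm]

theorem Connected.sum_expw_eq (hc : G.Connected) (u : V) :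
    ∑ v, expw G u v = ∑ i ∈ range (G.diam + 1), #(G.distSphere u i) * (2 * (1 / 2 : ℝ) ^ i) := by
  have := hc.nonempty
  have hdiam : ∀ v ∈ univ, G.dist u v ∈ range (G.diam + 1) := fun v _ =>
    mem_range.2 <| Nat.lt_succ_of_le <| dist_le_diam (connected_iff_ediam_ne_top.1 hc)
  rw [← sum_fiberwise_of_maps_to hdiam]
  refine sum_congr rfl fun i _ => ?_
  rw [sum_congr rfl fun v hv => by rw [expw, (mem_filter.1 hv).2], sum_const, nsmul_eq_mul]
  rfl

variable [DecidableRel G.Adj]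

theorem distSphere_one (u : V) : G.distSphere u 1 = G.neighborFinset u := by
  ext
  simp

theorem card_distSphere_add_two_le (u : V) (i : ℕ) :
    #(G.distSphere u (i + 2)) ≤ (G.maxDegree - 1) * #(G.distSphere u (i + 1)) := by
  classical
  have key := card_mul_le_card_mul (r := G.Adj) (m := 1) (n := G.maxDegree - 1)
    (s := G.distSphere u (i + 2)) (t := G.distSphere u (i + 1)) ?_ ?_
  · simpa [mul_comm] using key
  · intro a ha
    obtain ⟨w, hw, hdw⟩ := exists_adj_dist_eq_of_dist_eq_add_one (mem_distSphere.1 ha)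
    exact card_pos.2 ⟨w, by simp [hw.symm, hdw]⟩
  · intro b hb
    -- `b` has a neighbour `w` one step closer to `u`, which is not counted.
    obtain ⟨w, hw, hdw⟩ := exists_adj_dist_eq_of_dist_eq_add_one (mem_distSphere.1 hb)
    have hsub : (G.distSphere u (i + 2)).bipartiteBelow G.Adj b ⊆ (G.neighborFinset b).erase w := by
      intro a ha
      rw [mem_bipartiteBelow, mem_distSphere] at ha
      refine mem_erase.2 ⟨?_, by simpa using ha.2.symm⟩
      rintro rfl
      omega
    calc #((G.distSphere u (i + 2)).bipartiteBelow G.Adj b)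
        ≤ #((G.neighborFinset b).erase w) := card_le_card hsub
      _ = G.degree b - 1 := by
        rw [card_erase_of_mem (by simpa using hw.symm), card_neighborFinset_eq_degree]
      _ ≤ G.maxDegree - 1 := Nat.sub_le_sub_right (G.degree_le_maxDegree b) 1

theorem card_distSphere_add_one_le (u : V) (i : ℕ) :
    #(G.distSphere u (i + 1)) ≤ G.maxDegree * (G.maxDegree - 1) ^ i := by
  induction i with
  | zero => simpa [distSphere_one] using G.degree_le_maxDegree u
  | succ i ih =>
    calc #(G.distSphere u (i + 2))
        ≤ (G.maxDegree - 1) * #(G.distSphere u (i + 1)) := card_distSphere_add_two_le u i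
      _ ≤ (G.maxDegree - 1) * (G.maxDegree * (G.maxDegree - 1) ^ i) := by gcongr
      _ = G.maxDegree * (G.maxDegree - 1) ^ (i + 1) := by ring

theorem Connected.sum_expw_le (hc : G.Connected) (u : V) :
    ∑ v, expw G u v ≤ 2 + G.maxDegree * ∑ i ∈ range G.diam, (((G.maxDegree : ℝ) - 1) / 2) ^ i := by
  rw [hc.sum_expw_eq, sum_range_succ', hc.distSphere_zero, mul_sum, add_comm]
  refine add_le_add (by norm_num) (sum_le_sum fun i _ => ?_)
  have hcast : ((G.maxDegree * (G.maxDegree - 1) ^ i : ℕ) : ℝ) =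
      G.maxDegree * ((G.maxDegree : ℝ) - 1) ^ i := by
    rcases Nat.eq_zero_or_pos G.maxDegree with h | h
    · simp [h]
    · push_cast [Nat.cast_sub h]
      ring
  have hcard : (#(G.distSphere u (i + 1)) : ℝ) ≤ G.maxDegree * ((G.maxDegree : ℝ) - 1) ^ i :=
    hcast ▸ Nat.cast_le.2 (card_distSphere_add_one_le u i)
  calc (#(G.distSphere u (i + 1)) : ℝ) * (2 * (1 / 2) ^ (i + 1))
      = #(G.distSphere u (i + 1)) * (1 / 2) ^ i := by ring
    _ ≤ G.maxDegree * ((G.maxDegree : ℝ) - 1) ^ i * (1 / 2) ^ i := by gcongr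
    _ = G.maxDegree * (((G.maxDegree : ℝ) - 1) / 2) ^ i := by
      rw [mul_assoc, ← mul_pow, ← div_eq_mul_one_div]

end SimpleGraph

theorem fracFeasible_one_s13 [Fintype V] (G : SimpleGraph V) :
    FracFeasible G fun _ => 1 := by
  refine ⟨fun _ => zero_le_one, fun v => ?_⟩
  calc (1 : ℝ) ≤ expw G v v * 1 := by simp [expw]
    _ ≤ ∑ u, expw G u v * 1 :=
      single_le_sum (f := fun u => expw G u v * 1) (fun u _ => by unfold expw; positivity)
        (mem_univ v)

theorem card_div_le_gammaEF_of_sum_expw_le [Fintype V] {G : SimpleGraph V} {M : ℝ}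
    (hM : 0 < M) (h : ∀ u, ∑ v, expw G u v ≤ M) : Fintype.card V / M ≤ gammaEF G := by
  refine le_csInf ⟨_, _, fracFeasible_one_s13 G, rfl⟩ ?_
  rintro _ ⟨x, ⟨hx0, hx⟩, rfl⟩
  rw [div_le_iff₀ hM]
  calc (Fintype.card V : ℝ) = ∑ _v : V, (1 : ℝ) := by simp
    _ ≤ ∑ v, ∑ u, expw G u v * x u := sum_le_sum fun v _ => hx v
    _ = ∑ u, (∑ v, expw G u v) * x u := by
      rw [sum_comm]
      simp only [sum_mul]
    _ ≤ ∑ u, M * x u := sum_le_sum fun u _ => mul_le_mul_of_nonneg_right (h u) (hx0 u)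
    _ = (∑ u, x u) * M := by rw [← mul_sum, mul_comm]

/-- If `G` is connected of order `n`, maximum degree `Δ ≥ 4`, and diameter `d`, then
`γ*_{e,f}(G) ≥ n ((Δ-1)/2 - 1) / (Δ ((Δ-1)/2)^d - 3)`. -/
theorem stmt_13 {V : Type*} [Fintype V] (G : SimpleGraph V) [DecidableRel G.Adj]
    (hc : G.Connected) (Δ : ℕ) (hΔ : G.maxDegree = Δ) (h4 : 4 ≤ Δ) :
    (Fintype.card V : ℝ) * (((Δ : ℝ) - 1) / 2 - 1) /
        ((Δ : ℝ) * (((Δ : ℝ) - 1) / 2) ^ G.diam - 3) ≤ gammaEF G := by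
  have hsum (u : V) := hc.sum_expw_le u
  simp only [hΔ] at hsum
  set q : ℝ := ((Δ : ℝ) - 1) / 2 with hq
  have hΔ4 : (4 : ℝ) ≤ Δ := by exact_mod_cast h4
  have hq1 : 1 < q := by
    rw [hq]
    linarith
  have hpos : 0 < (Δ : ℝ) * q ^ G.diam - 3 := by
    nlinarith [one_le_pow₀ (n := G.diam) hq1.le]
  have hbound (u : V) : ∑ v, expw G u v ≤ ((Δ : ℝ) * q ^ G.diam - 3) / (q - 1) :=
    calc ∑ v, expw G u v ≤ 2 + Δ * ∑ i ∈ range G.diam, q ^ i := hsum u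
      _ = ((Δ : ℝ) * q ^ G.diam - 3) / (q - 1) := by
        have : q - 1 ≠ 0 := (sub_pos.2 hq1).ne'
        rw [geom_sum_eq hq1.ne']
        field_simp
        rw [hq]
        ring
  have := card_div_le_gammaEF_of_sum_expw_le (div_pos hpos (sub_pos.2 hq1)) hbound
  rwa [div_div_eq_mul_div] at this
end

section
/- For every positive integer n and real d > 0, max{(d+3)/6, n/(2+3d)} ≥ (1/6)(√(2n + 49/36) + 7/6). -/
open SimpleGraph Finset

variable {V : Type*}

/- With `s = √(2x + 49/36)` we have `(s - 7/6)(s + 7/6) = 2x`. Either `d + 3 ≥ s + 7/6`, or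
`0 < 2 + 3d < 3(s - 7/6)`, and then `(s + 7/6)(2 + 3d) ≤ 3(s + 7/6)(s - 7/6) = 6x`. -/
theorem sqrt_two_mul_add_le_max_div {x d : ℝ} (hx : 0 ≤ x) (hd : -(2 / 3) < d) :
    (1 / 6 : ℝ) * (Real.sqrt (2 * x + 49 / 36) + 7 / 6) ≤
      max ((d + 3) / 6) (x / (2 + 3 * d)) := by
  set s := Real.sqrt (2 * x + 49 / 36)
  have hs_nonneg : 0 ≤ s := Real.sqrt_nonneg _
  have hs : (s - 7 / 6) * (s + 7 / 6) = 2 * x := by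
    linear_combination Real.sq_sqrt (show 0 ≤ 2 * x + 49 / 36 by positivity)
  rcases le_or_gt (s + 7 / 6) (d + 3) with h | h
  · exact le_max_of_le_left (by linarith)
  · refine le_max_of_le_right ((le_div_iff₀ (by linarith)).2 ?_)
    calc 1 / 6 * (s + 7 / 6) * (2 + 3 * d)
        ≤ 1 / 6 * (s + 7 / 6) * (3 * (s - 7 / 6)) := by gcongr; linarith
      _ = x := by linear_combination hs / 2

theorem stmt_15_general (n : ℕ) (d : ℝ) (hd : 0 < d) :
    (1 / 6 : ℝ) * (Real.sqrt (2 * (n : ℝ) + 49 / 36) + 7 / 6) ≤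
      max ((d + 3) / 6) ((n : ℝ) / (2 + 3 * d)) :=
  sqrt_two_mul_add_le_max_div n.cast_nonneg (by linarith)

/-- For every positive integer `n` and real `d > 0`,
`max{(d+3)/6, n/(2+3d)} ≥ (1/6)(√(2n + 49/36) + 7/6)`. -/
theorem stmt_15 (n : ℕ) (hn : 0 < n) (d : ℝ) (hd : 0 < d) :
    (1 / 6 : ℝ) * (Real.sqrt (2 * (n : ℝ) + 49 / 36) + 7 / 6) ≤
      max ((d + 3) / 6) ((n : ℝ) / (2 + 3 * d)) :=
  stmt_15_general n d hd
end

section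
/- If T' is a subtree of a subcubic tree T, then γ_e(T') ≤ γ_e(T). -/
open SimpleGraph Finset

variable {V : Type*}

/-!
Take a minimum exponential dominating set `D` of `T` and move every vertex of `D` to its gate in
`T'`, the vertex of `T'` through which all paths from `T'` to it pass; the image `D'` is no
larger than `D`. Let `u ∈ T' \ D'`. Each `v ∈ D` seen from `u` is seen through the first vertex
`s ∈ D'` on the `u`-`v` path, and everything `D` sends to `u` through `s` comes from the branch
at `s` pointing away from `u`. In a subcubic tree that branch has weight at most `2` at `s`
(the bound `w ≤ 2` at a vertex of degree at most `2`), so it sends at most as much to `u` as `s`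
alone. Hence `w_{(T,D')}(u) ≥ w_{(T,D)}(u) ≥ 1`, and since `T`-paths between vertices of `T'`
stay in `T'`, these weights are the same in `T'`.
-/

open scoped Classical

namespace SimpleGraph

lemma sum_half_pow_dist_le_one_of_subset_singleton {G : SimpleGraph V} {A : Finset V} {s : V}
    (hA : A ⊆ {s}) : ∑ v ∈ A, (1 / 2 : ℝ) ^ G.dist s v ≤ 1 := by
  calc ∑ v ∈ A, (1 / 2 : ℝ) ^ G.dist s v ≤ ∑ v ∈ {s}, (1 / 2 : ℝ) ^ G.dist s v :=
        Finset.sum_le_sum_of_subset_of_nonneg hA (fun _ _ _ => by positivity)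
    _ = 1 := by simp

namespace IsTree

section

variable {G : SimpleGraph V} (hT : G.IsTree)

noncomputable def path (u v : V) : G.Walk u v :=
  (hT.connected.exists_walk_length_eq_dist u v).choose

lemma length_path (u v : V) : (hT.path u v).length = G.dist u v :=
  (hT.connected.exists_walk_length_eq_dist u v).choose_spec

lemma isPath_path (u v : V) : (hT.path u v).IsPath :=
  Walk.isPath_of_length_eq_dist _ (hT.length_path u v)

lemma eq_path {u v : V} {p : G.Walk u v} (hp : p.IsPath) : p = hT.path u v :=
  congrArg Subtype.val
    ((hT.isAcyclic.subsingleton_path u v).elim ⟨p, hp⟩ ⟨_, hT.isPath_path u v⟩)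

lemma length_eq_dist (hT : G.IsTree) {u v : V} {p : G.Walk u v} (hp : p.IsPath) :
    p.length = G.dist u v := by
  rw [hT.eq_path hp, length_path]

lemma path_self (u : V) : hT.path u u = .nil :=
  (hT.eq_path .nil).symm

lemma mem_support_path_iff {u v w : V} :
    w ∈ (hT.path u v).support ↔ G.dist u w + G.dist w v = G.dist u v := by
  constructor
  · intro h
    have := congrArg Walk.length ((hT.path u v).take_spec h)
    rwa [Walk.length_append, hT.length_eq_dist ((hT.isPath_path u v).takeUntil h),
      hT.length_eq_dist ((hT.isPath_path u v).dropUntil h), length_path] at this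
  · intro h
    have hp : ((hT.path u w).append (hT.path w v)).IsPath :=
      Walk.isPath_of_length_eq_dist _ (by rw [Walk.length_append, length_path, length_path, h])
    rw [← hT.eq_path hp, Walk.mem_support_append_iff]
    exact .inl (Walk.end_mem_support _)

lemma support_path_subset_left {u v w : V} (hw : w ∈ (hT.path u v).support) :
    (hT.path u w).support ⊆ (hT.path u v).support := by
  intro x hx
  rw [mem_support_path_iff] at *
  have := hT.connected.dist_triangle (u := x) (v := w) (w := v)
  have := hT.connected.dist_triangle (u := u) (v := x) (w := v)
  omega

lemma support_path_subset_right {u v w : V} (hw : w ∈ (hT.path u v).support) :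
    (hT.path w v).support ⊆ (hT.path u v).support := by
  intro x hx
  rw [mem_support_path_iff] at *
  have := hT.connected.dist_triangle (u := u) (v := w) (w := x)
  have := hT.connected.dist_triangle (u := u) (v := x) (w := v)
  omega

lemma dist_add_dist_of_support_inter {u v w : V}
    (h : ∀ y ∈ (hT.path u v).support, y ∈ (hT.path v w).support → y = v) :
    G.dist u v + G.dist v w = G.dist u w := by
  have hq := Walk.isPath_def _ |>.mp (hT.isPath_path v w)
  rw [← Walk.cons_tail_support, List.nodup_cons] at hq
  have hp : ((hT.path u v).append (hT.path v w)).IsPath := by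
    rw [Walk.isPath_def, Walk.support_append, List.nodup_append]
    refine ⟨(Walk.isPath_def _).mp (hT.isPath_path u v), hq.2, ?_⟩
    rintro y hy _ hy' rfl
    exact hq.1 (h y hy (List.mem_of_mem_tail hy') ▸ hy')
  rw [← hT.length_eq_dist hp, Walk.length_append, length_path, length_path]

lemma adj_snd_path {u v : V} (h : u ≠ v) : G.Adj u (hT.path u v).snd :=
  Walk.adj_snd <| by
    rw [Walk.not_nil_iff_lt_length, length_path]
    exact hT.connected.pos_dist_of_ne h

lemma dist_snd_path_add_one {u v : V} (h : u ≠ v) :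
    G.dist (hT.path u v).snd v + 1 = G.dist u v := by
  have hmem : (hT.path u v).snd ∈ (hT.path u v).support := Walk.getVert_mem_support _ 1
  rw [mem_support_path_iff, dist_eq_one_iff_adj.mpr (hT.adj_snd_path h)] at hmem
  omega

/-- The vertices `v` with `mdist G D u v < ⊤` (see `mdist_eq`). -/
def Visible (D : Finset V) (u v : V) : Prop :=
  v ∈ D ∧ ∀ w ∈ (hT.path u v).support, w ∈ D → w = v

lemma mdist_eq (D : Finset V) (u v : V) :
    mdist G D u v = if hT.Visible D u v then (G.dist u v : ℕ∞) else ⊤ := by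
  unfold mdist
  split_ifs with h
  · have : {p : G.Walk u v | p.IsPath ∧ v ∈ D ∧ ∀ w ∈ p.support, w ∈ D → w = v} =
        {hT.path u v} := by
      ext p
      refine ⟨fun ⟨hp, _⟩ => hT.eq_path hp, ?_⟩
      rintro rfl
      exact ⟨hT.isPath_path u v, h⟩
    rw [this, Set.image_singleton, sInf_singleton, length_path]
  · have : {p : G.Walk u v | p.IsPath ∧ v ∈ D ∧ ∀ w ∈ p.support, w ∈ D → w = v} =
        ∅ :=
      Set.eq_empty_of_forall_notMem fun p ⟨hp, hv, hw⟩ => h ⟨hv, hT.eq_path hp ▸ hw⟩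
    rw [this, Set.image_empty, sInf_empty]

lemma wblock_eq_sum_visible (D : Finset V) (u : V) :
    wblock G D u = ∑ v ∈ D with hT.Visible D u v, expw G u v := by
  rw [wblock, Finset.sum_filter]
  refine Finset.sum_congr rfl fun v _ => ?_
  rw [hT.mdist_eq]
  split_ifs <;> simp [halfPow, expw]

lemma visible_self {D : Finset V} {u : V} (hu : u ∈ D) : hT.Visible D u u :=
  ⟨hu, by simp [path_self]⟩

lemma one_le_wblock_of_mem (hT : G.IsTree) {D : Finset V} {u : V} (hu : u ∈ D) :
    1 ≤ wblock G D u := by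
  rw [hT.wblock_eq_sum_visible]
  calc (1 : ℝ) ≤ expw G u u := by norm_num [expw]
    _ ≤ ∑ v ∈ D with hT.Visible D u v, expw G u v :=
      Finset.single_le_sum (fun v _ => by unfold expw; positivity)
        (Finset.mem_filter.mpr ⟨hu, hT.visible_self hu⟩)

lemma Visible.of_mem_support {D : Finset V} {u v w : V} (h : hT.Visible D u v)
    (hw : w ∈ (hT.path u v).support) : hT.Visible D w v :=
  ⟨h.1, fun x hx hxD => h.2 x (hT.support_path_subset_right hw hx) hxD⟩

lemma exists_visible_of_mem_support {D : Finset V} {u v x : V} (hxD : x ∈ D)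
    (hx : x ∈ (hT.path u v).support) : ∃ s ∈ (hT.path u v).support, hT.Visible D u s := by
  obtain ⟨s, hs, hmin⟩ := ((hT.path u v).support.toFinset.filter (· ∈ D)).exists_min_image
    (G.dist u) ⟨x, by simp [hx, hxD]⟩
  simp only [Finset.mem_filter, List.mem_toFinset] at hs hmin
  refine ⟨s, hs.1, hs.2, fun w hw hwD => ?_⟩
  have hle := hmin w ⟨hT.support_path_subset_left hs.1 hw, hwD⟩
  rw [mem_support_path_iff] at hw
  exact hT.connected.dist_eq_zero_iff.mp (by omega)

lemma visible_iff_eq_of_mem {D : Finset V} {s v : V} (hs : s ∈ D) : hT.Visible D s v ↔ v = s :=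
  ⟨fun h => (h.2 s (Walk.start_mem_support _) hs).symm, by rintro rfl; exact hT.visible_self hs⟩

lemma sum_visible_via_snd_le {D A : Finset V} {s : V} {n : ℕ} (hsD : s ∉ D)
    (hA : ∀ v ∈ A, hT.Visible D s v ∧ G.dist s v ≤ n + 1) (z : V) :
    ∑ v ∈ A with (hT.path s v).snd = z, (1 / 2 : ℝ) ^ G.dist s v ≤
      1 / 2 * ∑ v ∈ D with hT.Visible D z v ∧ G.dist z v < G.dist s v ∧ G.dist z v ≤ n,
        (1 / 2 : ℝ) ^ G.dist z v := by
  have hd : ∀ v ∈ {v ∈ A | (hT.path s v).snd = z}, G.dist z v + 1 = G.dist s v := by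
    intro v hv
    rw [Finset.mem_filter] at hv
    have hsv : s ≠ v := fun h => hsD (h ▸ (hA v hv.1).1.1)
    exact hv.2 ▸ hT.dist_snd_path_add_one hsv
  rw [Finset.mul_sum]
  calc ∑ v ∈ A with (hT.path s v).snd = z, (1 / 2 : ℝ) ^ G.dist s v
      = ∑ v ∈ A with (hT.path s v).snd = z, 1 / 2 * (1 / 2 : ℝ) ^ G.dist z v := by
        refine Finset.sum_congr rfl fun v hv => ?_
        rw [← hd v hv, pow_succ, mul_comm]
    _ ≤ _ := by
        refine Finset.sum_le_sum_of_subset_of_nonneg (fun v hv => ?_) (fun _ _ _ => by positivity)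
        have hdv := hd v hv
        rw [Finset.mem_filter] at hv
        have hz : z ∈ (hT.path s v).support := hv.2 ▸ Walk.getVert_mem_support _ 1
        obtain ⟨hvis, hvn⟩ := hA v hv.1
        exact Finset.mem_filter.mpr ⟨hvis.1, hvis.of_mem_support hT hz, by omega, by omega⟩

section Subcubic

variable [Fintype V] [DecidableRel G.Adj]

/-- The branch at `s` avoiding its neighbour `t`: this is the bound `w ≤ 2` at a vertex of
degree at most `2`; the cap `n` on the distance only drives the induction. -/
lemma sum_visible_branch_le_one_of_le (hG : Subcubic G) (D : Finset V) (n : ℕ) :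
    ∀ {s t : V}, G.Adj s t →
      ∑ v ∈ D with hT.Visible D s v ∧ G.dist s v < G.dist t v ∧ G.dist s v ≤ n,
        (1 / 2 : ℝ) ^ G.dist s v ≤ 1 := by
  induction n with
  | zero =>
    intro s t _
    refine sum_half_pow_dist_le_one_of_subset_singleton fun v hv => ?_
    simp only [Finset.mem_filter, nonpos_iff_eq_zero] at hv
    exact Finset.mem_singleton.mpr (hT.connected.dist_eq_zero_iff.mp hv.2.2.2).symm
  | succ n ih =>
    intro s t hst
    by_cases hsD : s ∈ D
    · refine sum_half_pow_dist_le_one_of_subset_singleton fun v hv => ?_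
      exact Finset.mem_singleton.mpr
        ((hT.visible_iff_eq_of_mem hsD).mp (Finset.mem_filter.mp hv).2.1)
    set A := {v ∈ D | hT.Visible D s v ∧ G.dist s v < G.dist t v ∧ G.dist s v ≤ n + 1}
    set E := (G.neighborFinset s).erase t
    have hmaps : ∀ v ∈ A, (hT.path s v).snd ∈ E := by
      intro v hv
      simp only [A, Finset.mem_filter] at hv
      have hsv : s ≠ v := fun h => hsD (h ▸ hv.1)
      have hd := hT.dist_snd_path_add_one hsv
      refine Finset.mem_erase.mpr
        ⟨fun h => ?_, (G.mem_neighborFinset s _).mpr (hT.adj_snd_path hsv)⟩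
      rw [h] at hd
      omega
    have hcard : (E.card : ℝ) ≤ 2 := by
      have := hG s
      rw [Finset.card_erase_of_mem ((G.mem_neighborFinset s t).mpr hst),
        card_neighborFinset_eq_degree]
      exact_mod_cast (by omega : G.degree s - 1 ≤ 2)
    have hA : ∀ v ∈ A, hT.Visible D s v ∧ G.dist s v ≤ n + 1 := fun v hv =>
      ⟨(Finset.mem_filter.mp hv).2.1, (Finset.mem_filter.mp hv).2.2.2⟩
    calc ∑ v ∈ A, (1 / 2 : ℝ) ^ G.dist s v
        = ∑ z ∈ E, ∑ v ∈ A with (hT.path s v).snd = z, (1 / 2 : ℝ) ^ G.dist s v :=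
          (Finset.sum_fiberwise_of_maps_to hmaps _).symm
      _ ≤ ∑ z ∈ E, (1 / 2 : ℝ) := Finset.sum_le_sum fun z hz => by
          have hzs := ((G.mem_neighborFinset s z).mp (Finset.mem_of_mem_erase hz)).symm
          linarith [hT.sum_visible_via_snd_le hsD hA z, ih hzs]
      _ ≤ 1 := by
          rw [Finset.sum_const, nsmul_eq_mul]
          linarith

/-- Everything reaching `u` through `s` comes from the branch at `s` that avoids the neighbour
of `s` towards `u`. -/
lemma sum_expw_through_le (hG : Subcubic G) (D : Finset V) {u s : V} (hus : u ≠ s) :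
    ∑ v ∈ D with hT.Visible D s v ∧ s ∈ (hT.path u v).support, expw G u v ≤
      expw G u s := by
  set t := (hT.path s u).snd
  have hst := hT.adj_snd_path hus.symm
  have htu := hT.dist_snd_path_add_one hus.symm
  have hd : ∀ v ∈ {v ∈ D | hT.Visible D s v ∧ s ∈ (hT.path u v).support},
      G.dist u s + G.dist s v = G.dist u v := fun v hv =>
    (hT.mem_support_path_iff).mp (Finset.mem_filter.mp hv).2.2
  calc ∑ v ∈ D with hT.Visible D s v ∧ s ∈ (hT.path u v).support, expw G u v
      = expw G u s * ∑ v ∈ D with hT.Visible D s v ∧ s ∈ (hT.path u v).support,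
          (1 / 2 : ℝ) ^ G.dist s v := by
        rw [Finset.mul_sum]
        refine Finset.sum_congr rfl fun v hv => ?_
        rw [expw, expw, ← hd v hv, pow_add, mul_assoc]
    _ ≤ expw G u s * ∑ v ∈ D with
          hT.Visible D s v ∧ G.dist s v < G.dist t v ∧ G.dist s v ≤ Fintype.card V,
          (1 / 2 : ℝ) ^ G.dist s v := by
        refine mul_le_mul_of_nonneg_left
          (Finset.sum_le_sum_of_subset_of_nonneg (fun v hv => ?_) (fun _ _ _ => by positivity))
          (by unfold expw; positivity)
        have hdv := hd v hv
        have htri := hT.connected.dist_triangle (u := u) (v := t) (w := v)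
        have hlen := (hT.isPath_path s v).length_lt
        rw [length_path] at hlen
        rw [dist_comm (u := t), dist_comm (u := s)] at htu
        simp only [Finset.mem_filter] at hv ⊢
        exact ⟨hv.1, hv.2.1, by omega, hlen.le⟩
    _ ≤ expw G u s :=
        mul_le_of_le_one_right (by unfold expw; positivity)
          (hT.sum_visible_branch_le_one_of_le hG D (Fintype.card V) hst)

lemma wblock_le_wblock_of_exists_visible (hG : Subcubic G) {D D' : Finset V} {u : V} (hu : u ∉ D')
    (h : ∀ v, hT.Visible D u v → ∃ s ∈ (hT.path u v).support, hT.Visible D' u s) :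
    wblock G D u ≤ wblock G D' u := by
  have : Nonempty V := ⟨u⟩
  choose! σ hσ hσvis using h
  rw [hT.wblock_eq_sum_visible, hT.wblock_eq_sum_visible]
  have hmaps : ∀ v ∈ {v ∈ D | hT.Visible D u v}, σ v ∈ {s ∈ D' | hT.Visible D' u s} :=
    fun v hv => Finset.mem_filter.mpr ⟨(hσvis v (Finset.mem_filter.mp hv).2).1,
      hσvis v (Finset.mem_filter.mp hv).2⟩
  rw [← Finset.sum_fiberwise_of_maps_to hmaps]
  refine Finset.sum_le_sum fun s hs => ?_
  have hus : u ≠ s := fun h => hu (h ▸ (Finset.mem_filter.mp hs).1)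
  refine le_trans (Finset.sum_le_sum_of_subset_of_nonneg (fun v hv => ?_)
    (fun _ _ _ => by unfold expw; positivity)) (hT.sum_expw_through_le hG D hus)
  simp only [Finset.mem_filter] at hv ⊢
  obtain ⟨⟨hvD, hvis⟩, rfl⟩ := hv
  exact ⟨hvD, hvis.of_mem_support hT (hσ v hvis), hσ v hvis⟩

end Subcubic

end

section Induce

variable {G : SimpleGraph V} {S : Set V}

lemma induce_of_connected (hT : G.IsTree) (hS : (G.induce S).Connected) :
    (G.induce S).IsTree :=
  ⟨hS, hT.isAcyclic.induce S⟩

lemma map_path_induce (hT : G.IsTree) (hS : (G.induce S).Connected) (x y : S) :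
    ((hT.induce_of_connected hS).path x y).map (Embedding.induce S).toHom = hT.path x y :=
  hT.eq_path (((hT.induce_of_connected hS).isPath_path x y).map
    (Embedding.induce (G := G) S).injective)

lemma support_path_eq_map (hT : G.IsTree) (hS : (G.induce S).Connected) (x y : S) :
    (hT.path x y).support = ((hT.induce_of_connected hS).path x y).support.map (↑) :=
  (congrArg Walk.support (hT.map_path_induce hS x y)).symm.trans (Walk.support_map _ _)

lemma mem_of_mem_support_path (hT : G.IsTree) (hS : (G.induce S).Connected) {x y w : V}
    (hx : x ∈ S) (hy : y ∈ S) (hw : w ∈ (hT.path x y).support) : w ∈ S := by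
  rw [hT.support_path_eq_map hS ⟨x, hx⟩ ⟨y, hy⟩] at hw
  obtain ⟨w', -, rfl⟩ := List.mem_map.mp hw
  exact w'.2

lemma dist_induce (hT : G.IsTree) (hS : (G.induce S).Connected) (x y : S) :
    (G.induce S).dist x y = G.dist x y := by
  rw [← (hT.induce_of_connected hS).length_path, ← hT.length_path]
  exact (Walk.length_map _ _).symm.trans (congrArg Walk.length (hT.map_path_induce hS x y))

lemma visible_induce_iff (hT : G.IsTree) (hS : (G.induce S).Connected) (D : Finset V)
    (x y : S) :
    (hT.induce_of_connected hS).Visible (D.subtype (· ∈ S)) x y ↔ hT.Visible D x y := by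
  simp [Visible, hT.support_path_eq_map hS x y, Subtype.ext_iff]

lemma wblock_induce (hT : G.IsTree) (hS : (G.induce S).Connected) {D : Finset V}
    (hDS : ∀ v ∈ D, v ∈ S) (x : S) :
    wblock (G.induce S) (D.subtype (· ∈ S)) x = wblock G D x := by
  calc wblock (G.induce S) (D.subtype (· ∈ S)) x
      = ∑ y ∈ D.subtype (· ∈ S), halfPow (mdist G D x y) := by
        refine Finset.sum_congr rfl fun y _ => ?_
        rw [(hT.induce_of_connected hS).mdist_eq, hT.mdist_eq, hT.visible_induce_iff hS,
          hT.dist_induce hS]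
    _ = ∑ v ∈ D with v ∈ S, halfPow (mdist G D x v) :=
        Finset.sum_subtype_eq_sum_filter (fun v => halfPow (mdist G D x v))
    _ = wblock G D x := by rw [Finset.filter_true_of_mem hDS, wblock]

lemma exists_gate (hT : G.IsTree) (hS : (G.induce S).Connected) (v : V) :
    ∃ g ∈ S, ∀ s ∈ S, G.dist s g + G.dist g v = G.dist s v := by
  obtain ⟨x⟩ := hS.nonempty
  have hne : S.Nonempty := ⟨x, x.2⟩
  have hg := Function.argminOn_mem (G.dist · v) S hne
  refine ⟨_, hg, fun s hs => hT.dist_add_dist_of_support_inter fun y hy hy' => ?_⟩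
  have hmin :=
    Function.not_lt_argminOn (G.dist · v) S (hT.mem_of_mem_support_path hS hs hg hy)
  rw [mem_support_path_iff] at hy'
  exact (hT.connected.dist_eq_zero_iff.mp (by omega)).symm

lemma exists_isExpDomSet_induce [Fintype V] [DecidableRel G.Adj] (hT : G.IsTree)
    (hS : (G.induce S).Connected) (hG : Subcubic G) {D : Finset V} (hD : IsExpDomSet G D) :
    ∃ D' : Finset S, IsExpDomSet (G.induce S) D' ∧ D'.card ≤ D.card := by
  choose π hπS hπ using hT.exists_gate hS
  refine ⟨(D.image π).subtype (· ∈ S), fun x => ?_, ?_⟩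
  · have hDS : ∀ v ∈ D.image π, v ∈ S := by simp [hπS]
    rw [hT.wblock_induce hS hDS]
    by_cases hx : (x : V) ∈ D.image π
    · exact hT.one_le_wblock_of_mem hx
    refine (hD x).trans (hT.wblock_le_wblock_of_exists_visible hG hx fun v hv => ?_)
    exact hT.exists_visible_of_mem_support (Finset.mem_image_of_mem π hv.1)
      (hT.mem_support_path_iff.mpr (hπ v x x.2))
  · rw [Finset.card_subtype]
    exact (Finset.card_filter_le _ _).trans Finset.card_image_le

end Induce

end IsTree

end SimpleGraph

/-- If `T'` is a subtree of a subcubic tree `T`, then `γ_e(T') ≤ γ_e(T)`. -/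
theorem stmt_16 {V : Type*} [Fintype V] (G : SimpleGraph V) [DecidableRel G.Adj]
    (hT : G.IsTree) (hsub : Subcubic G) (S : Finset V)
    (hS : (G.induce (S : Set V)).Connected) :
    gammaE (G.induce (S : Set V)) ≤ gammaE G := by
  have hne : {k | ∃ D : Finset V, IsExpDomSet G D ∧ D.card = k}.Nonempty :=
    ⟨_, Finset.univ, fun u => hT.one_le_wblock_of_mem (Finset.mem_univ u), rfl⟩
  obtain ⟨D, hD, hDcard⟩ := Nat.sInf_mem hne
  obtain ⟨D', hD', hle⟩ := hT.exists_isExpDomSet_induce hS hsub hD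
  calc gammaE (G.induce (S : Set V)) ≤ D'.card := Nat.sInf_le ⟨D', hD', rfl⟩
    _ ≤ D.card := hle
    _ = gammaE G := hDcard
end
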